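/- The function Φ(r) = U'(r)/(1 + U(r)) satisfies Φ(r) ~ 2r/(15π) as r → 0 and Φ(r) ~ 1/(r log r) as r → ∞. -/

import Mathlib

open Real Filter

/-- The Uehling multiplier `U`. -/
noncomputable def U (r : ℝ) : ℝ :=
  r ^ 2 / (4 * π) * ∫ z in (0:ℝ)..1, (z ^ 2 - z ^ 4 / 3) / (1 + r ^ 2 * (1 - z ^ 2) / 4)

/-- The function `Φ = U'/(1+U)`. -/
noncomputable def Phi (r : ℝ) : ℝ := deriv U r / (1 + U r)

noncomputable def g (r z : ℝ) : ℝ := (z ^ 2 - z ^ 4 / 3) / (1 + r ^ 2 * (1 - z ^ 2) / 4)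

noncomputable def gr (r z : ℝ) : ℝ :=
  -((z ^ 2 - z ^ 4 / 3) * (r * (1 - z ^ 2) / 2)) / (1 + r ^ 2 * (1 - z ^ 2) / 4) ^ 2

noncomputable def II (r : ℝ) : ℝ := ∫ z in (0:ℝ)..1, g r z

noncomputable def JJ (r : ℝ) : ℝ := ∫ z in (0:ℝ)..1, gr r z

lemma U_eq (r : ℝ) : U r = r ^ 2 / (4 * π) * II r := rfl

lemma denom_pos (r : ℝ) {z : ℝ} (hz : z ^ 2 ≤ 1) : 0 < 1 + r ^ 2 * (1 - z ^ 2) / 4 := by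
  nlinarith [sq_nonneg r, sq_nonneg (r * z)]

lemma num_bounds {z : ℝ} (h0 : 0 ≤ z) (h1 : z ≤ 1) :
    0 ≤ z ^ 2 - z ^ 4 / 3 ∧ z ^ 2 - z ^ 4 / 3 ≤ 1 := by
  refine ⟨?_, ?_⟩
  · nlinarith [sq_nonneg z, sq_nonneg (z*z), pow_le_one₀ h0 h1 (n:=4), sq_nonneg (z^2)]
  · nlinarith [sq_nonneg (z^2), pow_le_one₀ h0 h1 (n:=2)]

lemma contg (r : ℝ) : ContinuousOn (g r) (Set.Icc 0 1) := by
  apply ContinuousOn.div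
  · fun_prop
  · fun_prop
  · intro z hz
    exact (denom_pos r (by nlinarith [hz.1, hz.2] : z ^ 2 ≤ 1)).ne'

lemma contgr (r : ℝ) : ContinuousOn (gr r) (Set.Icc 0 1) := by
  apply ContinuousOn.div
  · fun_prop
  · fun_prop
  · intro z hz
    exact (pow_ne_zero 2 (denom_pos r (by nlinarith [hz.1, hz.2] : z ^ 2 ≤ 1)).ne')

lemma intg (r : ℝ) : IntervalIntegrable (g r) MeasureTheory.volume 0 1 := by
  apply ContinuousOn.intervalIntegrable
  rw [Set.uIcc_of_le (by norm_num : (0:ℝ) ≤ 1)]; exact contg r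

lemma intgr (r : ℝ) : IntervalIntegrable (gr r) MeasureTheory.volume 0 1 := by
  apply ContinuousOn.intervalIntegrable
  rw [Set.uIcc_of_le (by norm_num : (0:ℝ) ≤ 1)]; exact contgr r

lemma hasDerivAt_g {z : ℝ} (hz : z ^ 2 ≤ 1) (r : ℝ) :
    HasDerivAt (fun r => g r z) (gr r z) r := by
  have hD : HasDerivAt (fun r : ℝ => 1 + r ^ 2 * (1 - z ^ 2) / 4)
      (2 * r ^ 1 * (1 - z ^ 2) / 4) r :=
    (((hasDerivAt_pow 2 r).mul_const (1 - z ^ 2)).div_const 4).const_add 1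
  have h := (hasDerivAt_const r (z ^ 2 - z ^ 4 / 3)).div hD (denom_pos r hz).ne'
  simp only [g, gr]
  refine h.congr_deriv (Eq.symm ?_)
  ring

lemma gr_abs {x z : ℝ} (hz : z ∈ Set.Ioc (0:ℝ) 1) : |gr x z| ≤ |x| / 2 := by
  have hz2 : z ^ 2 ≤ 1 := by nlinarith [hz.1, hz.2]
  have hD := denom_pos x hz2
  have hD1 : 1 ≤ 1 + x ^ 2 * (1 - z ^ 2) / 4 := by nlinarith [sq_nonneg x]
  have hA := num_bounds hz.1.le hz.2
  have h1 : |gr x z| = |(z ^ 2 - z ^ 4 / 3) * (x * (1 - z ^ 2) / 2)|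
      / (1 + x ^ 2 * (1 - z ^ 2) / 4) ^ 2 := by
    rw [gr, abs_div, abs_neg, abs_of_pos (pow_pos hD 2)]
  rw [h1]
  have h2 : |(z ^ 2 - z ^ 4 / 3) * (x * (1 - z ^ 2) / 2)| ≤ |x| / 2 := by
    rw [abs_mul]
    have e1 : |z ^ 2 - z ^ 4 / 3| ≤ 1 := by rw [abs_of_nonneg hA.1]; exact hA.2
    have e2 : |x * (1 - z ^ 2) / 2| ≤ |x| / 2 := by
      rw [abs_div, abs_mul, abs_of_nonneg (by nlinarith : (0:ℝ) ≤ 1 - z ^ 2)]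
      rw [abs_of_pos (by norm_num : (0:ℝ) < 2)]
      have : |x| * (1 - z ^ 2) ≤ |x| * 1 := by
        apply mul_le_mul_of_nonneg_left (by nlinarith [hz.1]) (abs_nonneg x)
      linarith
    calc |z ^ 2 - z ^ 4 / 3| * |x * (1 - z ^ 2) / 2| ≤ 1 * (|x| / 2) := by
          apply mul_le_mul e1 e2 (abs_nonneg _) (by norm_num)
      _ = |x| / 2 := by ring
  calc |(z ^ 2 - z ^ 4 / 3) * (x * (1 - z ^ 2) / 2)| / (1 + x ^ 2 * (1 - z ^ 2) / 4) ^ 2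
      ≤ |(z ^ 2 - z ^ 4 / 3) * (x * (1 - z ^ 2) / 2)| :=
        div_le_self (abs_nonneg _) (by nlinarith)
    _ ≤ |x| / 2 := h2

lemma hasDerivAt_II (r₀ : ℝ) : HasDerivAt II (JJ r₀) r₀ := by
  have huIoc : Set.uIoc (0:ℝ) 1 = Set.Ioc 0 1 := Set.uIoc_of_le (by norm_num)
  have hmeas : ∀ x : ℝ, MeasureTheory.AEStronglyMeasurable (g x)
      (MeasureTheory.volume.restrict (Set.uIoc (0:ℝ) 1)) := by
    intro x
    rw [huIoc]
    exact ((contg x).mono Set.Ioc_subset_Icc_self).aestronglyMeasurable measurableSet_Ioc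
  have hmeas' : MeasureTheory.AEStronglyMeasurable (gr r₀)
      (MeasureTheory.volume.restrict (Set.uIoc (0:ℝ) 1)) := by
    rw [huIoc]
    exact ((contgr r₀).mono Set.Ioc_subset_Icc_self).aestronglyMeasurable measurableSet_Ioc
  have h := intervalIntegral.hasDerivAt_integral_of_dominated_loc_of_deriv_le
    (F := fun r z => g r z) (F' := fun r z => gr r z) (x₀ := r₀)
    (bound := fun _ => (|r₀| + 1) / 2) (a := 0) (b := 1) (s := Metric.ball r₀ 1) (Metric.ball_mem_nhds r₀ one_pos)
    (Eventually.of_forall hmeas) (intg r₀) hmeas' ?_ (intervalIntegrable_const) ?_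
  · exact h.2
  · apply Eventually.of_forall
    intro z hz x hx
    rw [huIoc] at hz
    have : |x| ≤ |r₀| + 1 := by
      have := abs_sub_abs_le_abs_sub x r₀
      have h2 : |x - r₀| < 1 := by simpa [Real.dist_eq] using hx
      linarith
    calc ‖gr x z‖ ≤ |x| / 2 := gr_abs hz
      _ ≤ (|r₀| + 1) / 2 := by linarith
  · apply Eventually.of_forall
    intro z hz x _
    rw [huIoc] at hz
    exact hasDerivAt_g (by nlinarith [hz.1, hz.2]) x

lemma hasDerivAt_U (r : ℝ) :
    HasDerivAt U (r / (2 * π) * II r + r ^ 2 / (4 * π) * JJ r) r := by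
  have h1 : HasDerivAt (fun r : ℝ => r ^ 2 / (4 * π)) (2 * r ^ 1 / (4 * π)) r :=
    (hasDerivAt_pow 2 r).div_const _
  have h := h1.mul (hasDerivAt_II r)
  have hU : U = fun r => r ^ 2 / (4 * π) * II r := rfl
  rw [hU]
  refine h.congr_deriv (Eq.symm ?_)
  ring

lemma int_base_integrable :
    IntervalIntegrable (fun z : ℝ => z ^ 2 - z ^ 4 / 3) MeasureTheory.volume 0 1 := by
  apply Continuous.intervalIntegrable; fun_prop

lemma int_base : (∫ z in (0:ℝ)..1, (z ^ 2 - z ^ 4 / 3)) = 4 / 15 := by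
  have h1 : IntervalIntegrable (fun z : ℝ => z ^ 2) MeasureTheory.volume 0 1 := by
    apply Continuous.intervalIntegrable; fun_prop
  have h2 : IntervalIntegrable (fun z : ℝ => z ^ 4 / 3) MeasureTheory.volume 0 1 := by
    apply Continuous.intervalIntegrable; fun_prop
  rw [intervalIntegral.integral_sub h1 h2, intervalIntegral.integral_div]
  norm_num [integral_pow]

lemma II_bound (r : ℝ) : |II r - 4 / 15| ≤ r ^ 2 / 4 := by
  have heq : II r - 4 / 15 = ∫ z in (0:ℝ)..1, (g r z - (z ^ 2 - z ^ 4 / 3)) := by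
    rw [intervalIntegral.integral_sub (intg r) int_base_integrable, int_base]
    rfl
  rw [heq]
  have := intervalIntegral.norm_integral_le_of_norm_le_const
    (C := r ^ 2 / 4) (f := fun z => g r z - (z ^ 2 - z ^ 4 / 3)) (a := 0) (b := 1) ?_
  · simpa using this
  · intro z hz
    rw [Set.uIoc_of_le (by norm_num : (0:ℝ) ≤ 1)] at hz
    have hz2 : z ^ 2 ≤ 1 := by nlinarith [hz.1, hz.2]
    have hD := denom_pos r hz2
    have hD1 : 1 ≤ 1 + r ^ 2 * (1 - z ^ 2) / 4 := by nlinarith [sq_nonneg r]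
    have hA := num_bounds hz.1.le hz.2
    have heq2 : g r z - (z ^ 2 - z ^ 4 / 3) =
        -((z ^ 2 - z ^ 4 / 3) * (r ^ 2 * (1 - z ^ 2) / 4)) / (1 + r ^ 2 * (1 - z ^ 2) / 4) := by
      rw [g, eq_div_iff hD.ne', sub_mul, div_mul_cancel₀ _ hD.ne']; ring
    show ‖g r z - (z ^ 2 - z ^ 4 / 3)‖ ≤ r ^ 2 / 4
    rw [heq2, Real.norm_eq_abs, abs_div, abs_neg, abs_of_pos hD]
    have h2 : |(z ^ 2 - z ^ 4 / 3) * (r ^ 2 * (1 - z ^ 2) / 4)| ≤ r ^ 2 / 4 := by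
      rw [abs_mul, abs_of_nonneg hA.1, abs_of_nonneg (by nlinarith [sq_nonneg r] : (0:ℝ) ≤ r ^ 2 * (1 - z ^ 2) / 4)]
      nlinarith [sq_nonneg r, hA.1, hA.2, hz.1, hz.2]
    calc |(z ^ 2 - z ^ 4 / 3) * (r ^ 2 * (1 - z ^ 2) / 4)| / (1 + r ^ 2 * (1 - z ^ 2) / 4)
        ≤ |(z ^ 2 - z ^ 4 / 3) * (r ^ 2 * (1 - z ^ 2) / 4)| := div_le_self (abs_nonneg _) hD1
      _ ≤ r ^ 2 / 4 := h2

lemma JJ_bound (r : ℝ) : |JJ r| ≤ |r| / 2 := by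
  have := intervalIntegral.norm_integral_le_of_norm_le_const
    (C := |r| / 2) (f := fun z => gr r z) (a := 0) (b := 1) ?_
  · simpa [JJ] using this
  · intro z hz
    rw [Set.uIoc_of_le (by norm_num : (0:ℝ) ≤ 1)] at hz
    exact gr_abs hz

lemma tendsto_II : Tendsto II (nhds 0) (nhds (4 / 15)) := by
  have h0 : Tendsto (fun r : ℝ => r ^ 2 / 4) (nhds 0) (nhds 0) := by
    have := ((continuous_pow 2).tendsto (0:ℝ)).div_const 4
    simpa using this
  have h := squeeze_zero_norm (f := fun r => II r - 4 / 15) II_bound h0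
  have := h.add_const (4 / 15)
  simpa using this

lemma tendsto_JJ : Tendsto JJ (nhds 0) (nhds 0) := by
  have h0 : Tendsto (fun r : ℝ => |r| / 2) (nhds 0) (nhds 0) := by
    have := (continuous_abs.tendsto (0:ℝ)).div_const 2
    simpa using this
  exact squeeze_zero_norm JJ_bound h0

lemma tendsto_U : Tendsto U (nhds 0) (nhds 0) := by
  have h1 : Tendsto (fun r : ℝ => r ^ 2 / (4 * π)) (nhds 0) (nhds 0) := by
    have := ((continuous_pow 2).tendsto (0:ℝ)).div_const (4 * π)
    simpa using this
  have := h1.mul tendsto_II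
  simpa [show U = fun r => r ^ 2 / (4 * π) * II r from rfl] using this

lemma partA : Tendsto (fun r : ℝ => Phi r / r) (nhdsWithin 0 (Set.Ioi 0)) (nhds (2 / (15 * π))) := by
  have hnum : Tendsto (fun r : ℝ => 1 / (2 * π) * II r + r / (4 * π) * JJ r) (nhds 0)
      (nhds (1 / (2 * π) * (4 / 15) + 0 / (4 * π) * 0)) := by
    exact ((tendsto_const_nhds).mul tendsto_II).add
      (((continuous_id.tendsto (0:ℝ)).div_const (4 * π)).mul tendsto_JJ)
  have hden : Tendsto (fun r : ℝ => 1 + U r) (nhds 0) (nhds (1 + 0)) :=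
    tendsto_const_nhds.add tendsto_U
  have hT : Tendsto (fun r : ℝ => (1 / (2 * π) * II r + r / (4 * π) * JJ r) / (1 + U r))
      (nhds 0) (nhds (2 / (15 * π))) := by
    have := hnum.div hden (by norm_num)
    convert this using 2
    · rfl
    rw [eq_div_iff (by norm_num : (1:ℝ) + 0 ≠ 0)]
    field_simp
    ring
  apply Tendsto.congr' _ (hT.mono_left nhdsWithin_le_nhds)
  filter_upwards [self_mem_nhdsWithin] with r hr
  have hr' : (0:ℝ) < r := hr
  have hd : deriv U r = r * (1 / (2 * π) * II r + r / (4 * π) * JJ r) := by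
    rw [(hasDerivAt_U r).deriv]; ring
  rw [Phi, hd, mul_div_assoc, mul_div_cancel_left₀ _ hr'.ne']

noncomputable def cc (r : ℝ) : ℝ := Real.sqrt (r ^ 2 + 4)

lemma cc_sq (r : ℝ) : cc r ^ 2 = r ^ 2 + 4 := Real.sq_sqrt (by positivity)

lemma cc_pos (r : ℝ) : 0 < cc r := Real.sqrt_pos.2 (by positivity)

lemma two_le_cc (r : ℝ) : 2 ≤ cc r := by
  nlinarith [cc_sq r, cc_pos r, sq_nonneg r]

lemma lt_cc {r : ℝ} (hr : 0 ≤ r) : r < cc r := by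
  nlinarith [cc_sq r, cc_pos r]

lemma sqrt_half (r : ℝ) : Real.sqrt (1 + (r / 2) ^ 2) = cc r / 2 := by
  rw [show (1 + (r / 2) ^ 2 : ℝ) = (cc r / 2) ^ 2 by linear_combination -(cc_sq r) / 4]
  exact Real.sqrt_sq (div_nonneg (cc_pos r).le (by norm_num))

noncomputable def F (r z : ℝ) : ℝ :=
  4 / r ^ 2 * (z ^ 3 / 9 + (4 - 2 * r ^ 2) / (3 * r ^ 2) * z +
    cc r * (r ^ 2 - 2) / (3 * r ^ 3) * (Real.log (cc r + r * z) - Real.log (cc r - r * z)))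

lemma hasDerivAt_F {r z : ℝ} (hr : 0 < r) (h0 : 0 ≤ z) (h1 : z ≤ 1) :
    HasDerivAt (fun z => F r z) (g r z) z := by
  have ha : 0 < cc r + r * z := add_pos_of_pos_of_nonneg (cc_pos r) (by positivity)
  have hb : 0 < cc r - r * z := by
    have h2 : r * z ≤ r := by nlinarith
    have := lt_cc hr.le
    linarith
  have p1 : HasDerivAt (fun z : ℝ => z ^ 3 / 9) (3 * z ^ 2 / 9) z := by
    simpa using (hasDerivAt_pow 3 z).div_const 9
  have p2 : HasDerivAt (fun z : ℝ => (4 - 2 * r ^ 2) / (3 * r ^ 2) * z)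
      ((4 - 2 * r ^ 2) / (3 * r ^ 2) * 1) z := (hasDerivAt_id z).const_mul _
  have p3 : HasDerivAt (fun z : ℝ => Real.log (cc r + r * z)) (r * 1 / (cc r + r * z)) z :=
    (((hasDerivAt_id z).const_mul r).const_add (cc r)).log ha.ne'
  have p4 : HasDerivAt (fun z : ℝ => Real.log (cc r - r * z)) (-(r * 1) / (cc r - r * z)) z :=
    (((hasDerivAt_id z).const_mul r).const_sub (cc r)).log hb.ne'
  have h := (((p1.add p2).add (((p3.sub p4)).const_mul
    (cc r * (r ^ 2 - 2) / (3 * r ^ 3))))).const_mul (4 / r ^ 2)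
  have hfun : (fun z => F r z) = fun z : ℝ => 4 / r ^ 2 * (z ^ 3 / 9 +
      (4 - 2 * r ^ 2) / (3 * r ^ 2) * z + cc r * (r ^ 2 - 2) / (3 * r ^ 3) *
      (Real.log (cc r + r * z) - Real.log (cc r - r * z))) := rfl
  rw [hfun]
  refine h.congr_deriv (Eq.symm ?_)
  have hc2 := cc_sq r
  have hD : 0 < 1 + r ^ 2 * (1 - z ^ 2) / 4 := by nlinarith [sq_nonneg (r * z)]
  rw [g]
  have hD4 : (0:ℝ) < 4 + r ^ 2 * (1 - z ^ 2) := by nlinarith [sq_nonneg (r * z)]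
  have hA' : cc r + z * r ≠ 0 := by rw [mul_comm]; exact ha.ne'
  have hB' : cc r - z * r ≠ 0 := by rw [mul_comm]; exact hb.ne'
  field_simp [hD4.ne', hA', hB']
  linear_combination (18 * r ^ 4 * z ^ 2 - 36 * r ^ 2 * z ^ 2) * hc2

lemma F_zero (r : ℝ) : F r 0 = 0 := by simp [F]

lemma II_eq {r : ℝ} (hr : 0 < r) : II r = F r 1 - F r 0 := by
  apply intervalIntegral.integral_eq_sub_of_hasDerivAt
  · intro z hz
    rw [Set.uIcc_of_le (by norm_num : (0:ℝ) ≤ 1)] at hz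
    exact hasDerivAt_F hr hz.1 hz.2
  · exact intg r

noncomputable def V (r : ℝ) : ℝ :=
  (1 / 9 + (4 - 2 * r ^ 2) / (3 * r ^ 2) +
    2 * (r ^ 2 - 2) * cc r / (3 * r ^ 3) * Real.arsinh (r / 2)) / π

lemma arsinh_eq {r : ℝ} (hr : 0 < r) :
    Real.arsinh (r / 2) = Real.log (cc r + r) - Real.log 2 := by
  have hcrp : 0 < cc r + r := by linarith [cc_pos r]
  unfold Real.arsinh
  rw [sqrt_half, show r / 2 + cc r / 2 = (cc r + r) / 2 by ring,
    Real.log_div hcrp.ne' two_ne_zero]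

lemma log_diff {r : ℝ} (hr : 0 < r) :
    Real.log (cc r + r) - Real.log (cc r - r) = 2 * Real.arsinh (r / 2) := by
  have hcrp : 0 < cc r + r := by linarith [cc_pos r]
  have hcr : cc r - r = 4 / (cc r + r) := by
    rw [eq_div_iff hcrp.ne']; linear_combination cc_sq r
  have h2 : Real.log (cc r - r) = Real.log 4 - Real.log (cc r + r) := by
    rw [hcr, Real.log_div (by norm_num) hcrp.ne']
  have h4 : Real.log 4 = 2 * Real.log 2 := by
    rw [show (4:ℝ) = 2 ^ 2 by norm_num, Real.log_pow]; push_cast; ring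
  rw [arsinh_eq hr, h2, h4]; ring

lemma UeqV {r : ℝ} (hr : 0 < r) : U r = V r := by
  have hπ := Real.pi_ne_zero
  have hF1 : F r 1 = 4 / r ^ 2 * (1 / 9 + (4 - 2 * r ^ 2) / (3 * r ^ 2) +
      cc r * (r ^ 2 - 2) / (3 * r ^ 3) * (2 * Real.arsinh (r / 2))) := by
    rw [F]
    simp only [one_pow, mul_one]
    rw [log_diff hr]
  rw [U_eq, II_eq hr, F_zero, sub_zero, hF1, V]
  field_simp

noncomputable def V' (r : ℝ) : ℝ :=
  ((2 * r ^ 2 - 12) / (3 * r ^ 3) + 16 / (cc r * r ^ 4) * Real.arsinh (r / 2)) / π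

lemma hasDerivAt_cc (r : ℝ) : HasDerivAt cc (r / cc r) r := by
  have h1 : HasDerivAt (fun r : ℝ => r ^ 2 + 4) (2 * r) r := by
    simpa using (hasDerivAt_pow 2 r).add_const 4
  have h := (Real.hasDerivAt_sqrt (by positivity : r ^ 2 + 4 ≠ 0)).comp r h1
  refine h.congr_deriv (Eq.symm ?_)
  show r / cc r = 1 / (2 * cc r) * (2 * r)
  have := (cc_pos r).ne'
  field_simp

lemma hasDerivAt_ars (r : ℝ) : HasDerivAt (fun r => Real.arsinh (r / 2)) (1 / cc r) r := by
  have h := (Real.hasDerivAt_arsinh (r / 2)).comp r ((hasDerivAt_id r).div_const 2)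
  refine h.congr_deriv (Eq.symm ?_)
  rw [sqrt_half]
  have := (cc_pos r).ne'
  field_simp

lemma hasDerivAt_V {r : ℝ} (hr : 0 < r) : HasDerivAt V (V' r) r := by
  have hc := cc_pos r
  have hc2 := cc_sq r
  have q2 : HasDerivAt (fun r : ℝ => (4 - 2 * r ^ 2) / (3 * r ^ 2))
      ((-(2 * (2 * r ^ 1)) * (3 * r ^ 2) - (4 - 2 * r ^ 2) * (3 * (2 * r ^ 1))) / (3 * r ^ 2) ^ 2)
      r := by
    exact HasDerivAt.div (((hasDerivAt_pow 2 r).const_mul 2).const_sub 4)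
      ((hasDerivAt_pow 2 r).const_mul 3) (by positivity)
  have hnum : HasDerivAt (fun r : ℝ => 2 * (r ^ 2 - 2) * cc r)
      (2 * (2 * r ^ 1) * cc r + 2 * (r ^ 2 - 2) * (r / cc r)) r := by
    exact (((hasDerivAt_pow 2 r).sub_const 2).const_mul 2).mul (hasDerivAt_cc r)
  have hW : HasDerivAt (fun r : ℝ => 2 * (r ^ 2 - 2) * cc r / (3 * r ^ 3))
      (((2 * (2 * r ^ 1) * cc r + 2 * (r ^ 2 - 2) * (r / cc r)) * (3 * r ^ 3) -
        2 * (r ^ 2 - 2) * cc r * (3 * (3 * r ^ 2))) / (3 * r ^ 3) ^ 2) r := by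
    exact hnum.div ((hasDerivAt_pow 3 r).const_mul 3) (by positivity)
  have hprod := hW.mul (hasDerivAt_ars r)
  have htot := (((hasDerivAt_const r ((1:ℝ)/9)).add q2).add hprod).div_const π
  have hfun : V = fun r : ℝ => (1 / 9 + (4 - 2 * r ^ 2) / (3 * r ^ 2) +
      2 * (r ^ 2 - 2) * cc r / (3 * r ^ 3) * Real.arsinh (r / 2)) / π := rfl
  rw [hfun]
  refine htot.congr_deriv (Eq.symm ?_)
  rw [V']
  field_simp
  linear_combination 2 * Real.arsinh (r / 2) * (r ^ 2 - 6) * hc2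

lemma arsinh_le {x : ℝ} (hx : 0 ≤ x) : Real.arsinh x ≤ x := by
  calc Real.arsinh x ≤ Real.arsinh (Real.sinh x) := by
        apply Real.arsinh_le_arsinh.2
        rcases eq_or_lt_of_le hx with h | h
        · simp [← h]
        · exact (Real.self_lt_sinh_iff.2 h).le
    _ = x := Real.arsinh_sinh x

lemma tendsto_cc_div : Tendsto (fun r : ℝ => cc r / r) atTop (nhds 1) := by
  have h1 : Tendsto (fun r : ℝ => 1 + 4 / r ^ 2) atTop (nhds 1) := by
    have h4 : Tendsto (fun r : ℝ => 4 / r ^ 2) atTop (nhds 0) :=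
      Tendsto.div_atTop tendsto_const_nhds (tendsto_pow_atTop (by norm_num))
    simpa using (tendsto_const_nhds (x := (1:ℝ))).add h4
  have h2 : Tendsto (fun r : ℝ => Real.sqrt (1 + 4 / r ^ 2)) atTop (nhds 1) := by
    have := (Real.continuous_sqrt.tendsto 1).comp h1
    simpa [Function.comp_def] using this
  apply Tendsto.congr' _ h2
  filter_upwards [eventually_gt_atTop 0] with r hr
  rw [show (1 + 4 / r ^ 2 : ℝ) = (r ^ 2 + 4) / r ^ 2 by field_simp,
    Real.sqrt_div (by positivity) _, show Real.sqrt (r ^ 2) = r from Real.sqrt_sq hr.le]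
  rfl

lemma tendsto_arsinh_sub_log :
    Tendsto (fun r : ℝ => Real.arsinh (r / 2) - Real.log r) atTop (nhds 0) := by
  have h1 : Tendsto (fun r : ℝ => Real.log (cc r / r + 1) - Real.log 2) atTop (nhds 0) := by
    have h2 := (tendsto_cc_div.add_const 1).log (by norm_num)
    have h3 := h2.sub_const (Real.log 2)
    norm_num at h3
    exact h3
  apply Tendsto.congr' _ h1
  filter_upwards [eventually_gt_atTop 0] with r hr
  have hcrp : 0 < cc r + r := by linarith [cc_pos r]
  rw [show cc r / r + 1 = (cc r + r) / r by field_simp, Real.log_div hcrp.ne' hr.ne',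
    arsinh_eq hr]
  ring

lemma tendsto_Vp_mul : Tendsto (fun r : ℝ => V' r * r) atTop (nhds (2 / (3 * π))) := by
  have h4 : Tendsto (fun r : ℝ => 4 / r ^ 2) atTop (nhds 0) :=
    Tendsto.div_atTop tendsto_const_nhds (tendsto_pow_atTop (by norm_num))
  have hb : Tendsto (fun r : ℝ => (2 * r ^ 2 - 12) / (3 * r ^ 2)) atTop (nhds (2 / 3)) := by
    have h5 := (tendsto_const_nhds (x := (2/3:ℝ))).sub h4
    norm_num at h5
    apply Tendsto.congr' _ h5
    filter_upwards [eventually_gt_atTop 0] with r hr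
    field_simp
    ring
  have hs : Tendsto (fun r : ℝ => 16 / (cc r * r ^ 3) * Real.arsinh (r / 2)) atTop (nhds 0) := by
    apply tendsto_of_tendsto_of_tendsto_of_le_of_le' tendsto_const_nhds h4
    · filter_upwards [eventually_gt_atTop 0] with r hr
      have hsn := Real.arsinh_nonneg_iff.2 (by positivity : (0:ℝ) ≤ r / 2)
      have hcc : (0:ℝ) ≤ cc r * r ^ 3 := mul_nonneg (cc_pos r).le (by positivity)
      exact mul_nonneg (div_nonneg (by norm_num) hcc) hsn
    · filter_upwards [eventually_gt_atTop 0] with r hr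
      have h1 : Real.arsinh (r / 2) ≤ r / 2 := arsinh_le (by positivity)
      have hccp : (0:ℝ) < cc r * r ^ 3 := mul_pos (cc_pos r) (by positivity)
      calc 16 / (cc r * r ^ 3) * Real.arsinh (r / 2)
          ≤ 16 / (cc r * r ^ 3) * (r / 2) := by
            apply mul_le_mul_of_nonneg_left h1 (div_nonneg (by norm_num) hccp.le)
        _ ≤ 4 / r ^ 2 := by
            rw [div_mul_eq_mul_div, div_le_div_iff₀ hccp (by positivity)]
            nlinarith [two_le_cc r, pow_pos hr 3]
  have htot := (hb.add hs).div_const π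
  norm_num at htot
  rw [show (2:ℝ)/3/π = 2/(3*π) from by ring] at htot
  apply Tendsto.congr' _ htot
  filter_upwards [eventually_gt_atTop 0] with r hr
  have hπ := Real.pi_ne_zero
  have hcc := (cc_pos r).ne'
  rw [V']
  field_simp

lemma tendsto_oneV_log :
    Tendsto (fun r : ℝ => (1 + V r) / Real.log r) atTop (nhds (2 / (3 * π))) := by
  have h1log : Tendsto (fun r : ℝ => 1 / Real.log r) atTop (nhds 0) :=
    Tendsto.div_atTop tendsto_const_nhds Real.tendsto_log_atTop
  have hA : Tendsto (fun r : ℝ => 1 / 9 + (4 - 2 * r ^ 2) / (3 * r ^ 2)) atTop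
      (nhds (-(5 / 9))) := by
    have h4 : Tendsto (fun r : ℝ => 4 / (3 * r ^ 2)) atTop (nhds 0) :=
      Tendsto.div_atTop tendsto_const_nhds
        ((tendsto_pow_atTop (by norm_num)).const_mul_atTop (by norm_num))
    have h5 := ((tendsto_const_nhds (x := (1/9 - 2/3 : ℝ))).add h4)
    norm_num at h5
    apply Tendsto.congr' _ h5
    filter_upwards [eventually_gt_atTop 0] with r hr
    field_simp
    ring
  have hAlog : Tendsto (fun r : ℝ => (1 / 9 + (4 - 2 * r ^ 2) / (3 * r ^ 2)) / Real.log r)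
      atTop (nhds 0) := Tendsto.div_atTop hA Real.tendsto_log_atTop
  have hq : Tendsto (fun r : ℝ => (r ^ 2 - 2) / r ^ 2) atTop (nhds 1) := by
    have h4 : Tendsto (fun r : ℝ => 2 / r ^ 2) atTop (nhds 0) :=
      Tendsto.div_atTop tendsto_const_nhds (tendsto_pow_atTop (by norm_num))
    have h5 := (tendsto_const_nhds (x := (1:ℝ))).sub h4
    norm_num at h5
    apply Tendsto.congr' _ h5
    filter_upwards [eventually_gt_atTop 0] with r hr
    field_simp
  have hbb : Tendsto (fun r : ℝ => 2 * (r ^ 2 - 2) * cc r / (3 * r ^ 3)) atTop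
      (nhds (2 / 3)) := by
    have h5 := ((tendsto_const_nhds (x := (2/3:ℝ))).mul hq).mul tendsto_cc_div
    norm_num at h5
    apply Tendsto.congr' _ h5
    filter_upwards [eventually_gt_atTop 0] with r hr
    ring
  have hslog : Tendsto (fun r : ℝ => Real.arsinh (r / 2) / Real.log r) atTop (nhds 1) := by
    have h5 := (tendsto_const_nhds (x := (1:ℝ))).add
      (Tendsto.div_atTop tendsto_arsinh_sub_log Real.tendsto_log_atTop)
    norm_num at h5
    apply Tendsto.congr' _ h5
    filter_upwards [eventually_gt_atTop 1] with r hr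
    have hlr : 0 < Real.log r := Real.log_pos hr
    field_simp
    ring
  have t2 := (tendsto_const_nhds (x := (1/π : ℝ))).mul hAlog
  have t3 := (tendsto_const_nhds (x := (1/π : ℝ))).mul (hbb.mul hslog)
  have total := (h1log.add t2).add t3
  rw [show (0:ℝ) + 1/π * 0 + 1/π * (2/3 * 1) = 2/(3*π) from by ring] at total
  apply Tendsto.congr' _ total
  apply Eventually.of_forall
  intro r
  unfold V
  ring

lemma partB : Tendsto (fun r : ℝ => Phi r * (r * Real.log r)) atTop (nhds 1) := by
  have hne : (2:ℝ)/(3*π) ≠ 0 := by positivity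
  have h := tendsto_Vp_mul.div tendsto_oneV_log hne
  rw [div_self hne] at h
  apply Tendsto.congr' _ h
  filter_upwards [eventually_gt_atTop 0] with r hr
  have hUV : U =ᶠ[nhds r] V :=
    Filter.eventuallyEq_of_mem (Ioi_mem_nhds hr) (fun x hx => UeqV hx)
  have hd : deriv U r = V' r := ((hasDerivAt_V hr).congr_of_eventuallyEq hUV).deriv
  simp only [Pi.div_apply]
  rw [Phi, hd, UeqV hr, div_div_eq_mul_div]
  ring

theorem Phi_asymptotics :
    Tendsto (fun r : ℝ => Phi r / r) (nhdsWithin 0 (Set.Ioi 0)) (nhds (2 / (15 * π))) ∧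
    Tendsto (fun r : ℝ => Phi r * (r * Real.log r)) atTop (nhds 1) :=
  ⟨partA, partB⟩
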